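/- arXiv:2601.19549 — 2 statements merged into one kernel-verified Lean document; each statement's English description precedes it below -/
import Mathlib

section
/- With the Gauss-sequence model of a knotoid diagram D with n ≥ 3 crossings: call D alternating if, reading the 2n passage positions in order 0, 1, …, 2n−1, over-passages and under-passages strictly alternate (no two consecutive positions, in the linear order, are both over-passages or both under-passages). If the diagram has at least 3 crossings, then max_a d(D_a) − min_a d(D_a) ≥ 1, with equality if and only if D is alternating. -/
/-- The label of position `p` relative to base point `a`, i.e. the order in which position `p`
is encountered when traversing the `2*n` positions cyclically starting at base point `a`. -/
def relLabel (n : ℕ) (a : Fin (2 * n + 1)) (p : Fin (2 * n)) : ℕ :=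
  (p.val + 2 * n - a.val) % (2 * n)

/-- The warping degree of the diagram with Gauss sequence `o, u` at base point `a`. -/
def warpingDegree (n : ℕ) (o u : Fin n → Fin (2 * n)) (a : Fin (2 * n + 1)) : ℕ :=
  (Finset.univ.filter fun c => relLabel n a (u c) < relLabel n a (o c)).card

/-- The position `p ↦ 2n - 1 - p` of the reversed diagram. -/
def revPos (n : ℕ) (p : Fin (2 * n)) : Fin (2 * n) :=
  ⟨2 * n - 1 - p.val, by have := p.isLt; omega⟩

/-- The base point of the reversed diagram corresponding to base point `a`. -/
def revBase (n : ℕ) (a : Fin (2 * n + 1)) : Fin (2 * n + 1) :=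
  ⟨2 * n - a.val, by have := a.isLt; omega⟩

/-- The cutting number of crossing `c` at base point `a`: `2α − β − γ` where `α` is the
relabeled position of the over-passage, `β` that of the under-passage and `γ = β + 1`. -/
def cutNum (n : ℕ) (o u : Fin n → Fin (2 * n)) (a : Fin (2 * n + 1)) (c : Fin n) : ℤ :=
  2 * (relLabel n a (o c) : ℤ) - (relLabel n a (u c) : ℤ) - ((relLabel n a (u c) : ℤ) + 1)

/-- The diagram is alternating: along consecutive positions, over-passages and
under-passages strictly alternate. -/
def IsAlternating (n : ℕ) (o u : Fin n → Fin (2 * n)) : Prop :=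
  ∀ p q : Fin (2 * n), p.val + 1 = q.val → ((∃ c, o c = p) ↔ (∃ c, u c = q))

lemma relLabel_eq {n : ℕ} (a : Fin (2 * n + 1)) (p : Fin (2 * n)) :
    relLabel n a p = if a.val ≤ p.val then p.val - a.val else p.val + 2 * n - a.val := by
  have hp := p.isLt
  have ha := a.isLt
  unfold relLabel
  split_ifs with h
  · have h2 : p.val + 2 * n - a.val = (p.val - a.val) + 2 * n := by omega
    rw [h2, Nat.add_mod_right, Nat.mod_eq_of_lt (by omega)]
  · rw [Nat.mod_eq_of_lt (by omega)]

/-- The warping degree as a function of a natural-number base point. -/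
def wdAt (n : ℕ) (o u : Fin n → Fin (2 * n)) (k : ℕ) : ℕ :=
  if h : k ≤ 2 * n then warpingDegree n o u ⟨k, by omega⟩ else 0

section Aux
variable {n : ℕ} {o u : Fin n → Fin (2 * n)}

lemma wdAt_mk {k : ℕ} (h : k ≤ 2 * n) :
    wdAt n o u k = warpingDegree n o u ⟨k, by omega⟩ := dif_pos h

lemma wdAt_eq (a : Fin (2 * n + 1)) : wdAt n o u a.val = warpingDegree n o u a := by
  rw [wdAt_mk (by omega), Fin.eta]

lemma ou_ne (hval : Function.Injective (Sum.elim o u : Fin n ⊕ Fin n → Fin (2 * n)))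
    (c c' : Fin n) : o c ≠ u c' := fun h => by
  have := hval (a₁ := Sum.inl c) (a₂ := Sum.inr c') h
  simp at this

lemma o_inj (hval : Function.Injective (Sum.elim o u : Fin n ⊕ Fin n → Fin (2 * n))) :
    Function.Injective o := fun c c' h => by
  have := hval (a₁ := Sum.inl c) (a₂ := Sum.inl c') h
  simpa using this

lemma u_inj (hval : Function.Injective (Sum.elim o u : Fin n ⊕ Fin n → Fin (2 * n))) :
    Function.Injective u := fun c c' h => by
  have := hval (a₁ := Sum.inr c) (a₂ := Sum.inr c') h
  simpa using this

lemma passage_surj (hval : Function.Injective (Sum.elim o u : Fin n ⊕ Fin n → Fin (2 * n)))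
    (p : Fin (2 * n)) : (∃ c, o c = p) ∨ (∃ c, u c = p) := by
  have hb : Function.Bijective (Sum.elim o u : Fin n ⊕ Fin n → Fin (2 * n)) := by
    rw [Fintype.bijective_iff_injective_and_card]
    exact ⟨hval, by simp [two_mul]⟩
  obtain ⟨s, hs⟩ := hb.2 p
  cases s with
  | inl c => exact Or.inl ⟨c, hs⟩
  | inr c => exact Or.inr ⟨c, hs⟩

lemma wd_step_over (hval : Function.Injective (Sum.elim o u : Fin n ⊕ Fin n → Fin (2 * n)))
    {k : ℕ} (hk : k < 2 * n) (c0 : Fin n) (hc0 : (o c0).val = k) :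
    warpingDegree n o u ⟨k + 1, by omega⟩ = warpingDegree n o u ⟨k, by omega⟩ + 1 := by
  classical
  have hu0 : (u c0).val ≠ k := by
    intro h
    exact ou_ne hval c0 c0 (Fin.ext (by omega))
  unfold warpingDegree
  have hne : c0 ∉ Finset.univ.filter
      (fun c => relLabel n (⟨k, by omega⟩ : Fin (2*n+1)) (u c) < relLabel n ⟨k, by omega⟩ (o c)) := by
    simp only [Finset.mem_filter, Finset.mem_univ, true_and, not_lt, relLabel_eq]
    have h1 := (u c0).isLt
    have h2 := (o c0).isLt
    split_ifs <;> omega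
  have hset : (Finset.univ.filter
      (fun c => relLabel n (⟨k+1, by omega⟩ : Fin (2*n+1)) (u c) < relLabel n ⟨k+1, by omega⟩ (o c)))
      = insert c0 (Finset.univ.filter
      (fun c => relLabel n (⟨k, by omega⟩ : Fin (2*n+1)) (u c) < relLabel n ⟨k, by omega⟩ (o c))) := by
    ext c
    simp only [Finset.mem_filter, Finset.mem_univ, true_and, Finset.mem_insert]
    have h1 := (u c).isLt
    have h2 := (o c).isLt
    by_cases hc : c = c0
    · subst hc
      simp only [relLabel_eq, true_or, iff_true]
      split_ifs <;> omega
    · have ho : (o c).val ≠ k := by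
        intro h; exact hc (o_inj hval (Fin.ext (by omega)))
      have hu : (u c).val ≠ k := by
        intro h; exact ou_ne hval c0 c (Fin.ext (by omega)).symm
      simp only [relLabel_eq, hc, false_or]
      split_ifs <;> omega
  rw [hset, Finset.card_insert_of_notMem hne]

lemma wd_step_under (hval : Function.Injective (Sum.elim o u : Fin n ⊕ Fin n → Fin (2 * n)))
    {k : ℕ} (hk : k < 2 * n) (c0 : Fin n) (hc0 : (u c0).val = k) :
    warpingDegree n o u ⟨k, by omega⟩ = warpingDegree n o u ⟨k + 1, by omega⟩ + 1 := by
  classical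
  have ho0 : (o c0).val ≠ k := by
    intro h
    exact ou_ne hval c0 c0 (Fin.ext (by omega))
  unfold warpingDegree
  have hne : c0 ∉ Finset.univ.filter
      (fun c => relLabel n (⟨k+1, by omega⟩ : Fin (2*n+1)) (u c) < relLabel n ⟨k+1, by omega⟩ (o c)) := by
    simp only [Finset.mem_filter, Finset.mem_univ, true_and, not_lt, relLabel_eq]
    have h1 := (u c0).isLt
    have h2 := (o c0).isLt
    split_ifs <;> omega
  have hset : (Finset.univ.filter
      (fun c => relLabel n (⟨k, by omega⟩ : Fin (2*n+1)) (u c) < relLabel n ⟨k, by omega⟩ (o c)))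
      = insert c0 (Finset.univ.filter
      (fun c => relLabel n (⟨k+1, by omega⟩ : Fin (2*n+1)) (u c) < relLabel n ⟨k+1, by omega⟩ (o c))) := by
    ext c
    simp only [Finset.mem_filter, Finset.mem_univ, true_and, Finset.mem_insert]
    have h1 := (u c).isLt
    have h2 := (o c).isLt
    by_cases hc : c = c0
    · subst hc
      simp only [relLabel_eq, true_or, iff_true]
      split_ifs <;> omega
    · have ho : (o c).val ≠ k := by
        intro h; exact ou_ne hval c c0 (Fin.ext (by omega))
      have hu : (u c).val ≠ k := by
        intro h; exact hc (u_inj hval (Fin.ext (by omega)))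
      simp only [relLabel_eq, hc, false_or]
      split_ifs <;> omega
  rw [hset, Finset.card_insert_of_notMem hne]

/-- Exactly one of the two step behaviours occurs at each position. -/
lemma wd_step (hval : Function.Injective (Sum.elim o u : Fin n ⊕ Fin n → Fin (2 * n)))
    {k : ℕ} (hk : k < 2 * n) :
    ((∃ c, (o c).val = k) ∧ ¬ (∃ c, (u c).val = k) ∧
      wdAt n o u (k + 1) = wdAt n o u k + 1) ∨
    ((∃ c, (u c).val = k) ∧ ¬ (∃ c, (o c).val = k) ∧
      wdAt n o u k = wdAt n o u (k + 1) + 1) := by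
  have hnb : ¬ ((∃ c, (o c).val = k) ∧ (∃ c, (u c).val = k)) := by
    rintro ⟨⟨c, hc⟩, ⟨c', hc'⟩⟩
    exact ou_ne hval c c' (Fin.ext (by omega))
  rcases passage_surj hval ⟨k, hk⟩ with ⟨c, hc⟩ | ⟨c, hc⟩
  · refine Or.inl ⟨⟨c, congrArg Fin.val hc⟩, fun h => hnb ⟨⟨c, congrArg Fin.val hc⟩, h⟩, ?_⟩
    rw [wdAt_mk (by omega), wdAt_mk (by omega)]
    exact wd_step_over hval hk c (congrArg Fin.val hc)
  · refine Or.inr ⟨⟨c, congrArg Fin.val hc⟩, fun h => hnb ⟨h, ⟨c, congrArg Fin.val hc⟩⟩, ?_⟩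
    rw [wdAt_mk (by omega), wdAt_mk (by omega)]
    exact wd_step_under hval hk c (congrArg Fin.val hc)

end Aux

/-- Inequality (4.4): for a diagram with at least 3 crossings, the spread of the warping
degree over base points is at least 1, with equality iff the diagram is alternating. -/
theorem warpingDegree_spread (n : ℕ) (hn : 3 ≤ n) (o u : Fin n → Fin (2 * n))
    (hval : Function.Injective (Sum.elim o u : Fin n ⊕ Fin n → Fin (2 * n))) :
    ∃ amin amax : Fin (2 * n + 1),
      (∀ b, warpingDegree n o u amin ≤ warpingDegree n o u b) ∧
      (∀ b, warpingDegree n o u b ≤ warpingDegree n o u amax) ∧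
      warpingDegree n o u amin + 1 ≤ warpingDegree n o u amax ∧
      (warpingDegree n o u amax = warpingDegree n o u amin + 1 ↔ IsAlternating n o u) := by
  classical
  obtain ⟨amin, -, hmin⟩ := Finset.exists_min_image Finset.univ (warpingDegree n o u)
    ⟨⟨0, by omega⟩, Finset.mem_univ _⟩
  obtain ⟨amax, -, hmax⟩ := Finset.exists_max_image Finset.univ (warpingDegree n o u)
    ⟨⟨0, by omega⟩, Finset.mem_univ _⟩
  have hmin' : ∀ b, warpingDegree n o u amin ≤ warpingDegree n o u b :=
    fun b => hmin b (Finset.mem_univ b)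
  have hmax' : ∀ b, warpingDegree n o u b ≤ warpingDegree n o u amax :=
    fun b => hmax b (Finset.mem_univ b)
  have hminW : ∀ k, k ≤ 2 * n → warpingDegree n o u amin ≤ wdAt n o u k := by
    intro k hk
    rw [wdAt_mk hk]
    exact hmin' _
  have hmaxW : ∀ k, k ≤ 2 * n → wdAt n o u k ≤ warpingDegree n o u amax := by
    intro k hk
    rw [wdAt_mk hk]
    exact hmax' _
  -- spread at least one
  have hge : warpingDegree n o u amin + 1 ≤ warpingDegree n o u amax := by
    have hklt : (o ⟨0, by omega⟩).val < 2 * n := (o ⟨0, by omega⟩).isLt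
    rcases wd_step hval hklt with ⟨-, -, hstep⟩ | ⟨-, hno, -⟩
    · have h1 := hminW ((o ⟨0, by omega⟩ : Fin (2 * n)).val) (by omega)
      have h2 := hmaxW ((o ⟨0, by omega⟩ : Fin (2 * n)).val + 1) (by omega)
      omega
    · exact absurd ⟨⟨0, by omega⟩, rfl⟩ hno
  refine ⟨amin, amax, hmin', hmax', hge, ?_, ?_⟩
  · -- equality → alternating
    intro heq p q hpq
    obtain ⟨k, hplt⟩ := p
    obtain ⟨k', hqlt⟩ := q
    simp only at hpq
    subst hpq
    have hstepk := wd_step (o := o) (u := u) hval (k := k) (by omega)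
    have hstepk1 := wd_step (o := o) (u := u) hval (k := k + 1) hqlt
    have hb0 := hminW k (by omega)
    have hb1 := hmaxW k (by omega)
    have hb2 := hminW (k + 1 + 1) (by omega)
    have hb3 := hmaxW (k + 1 + 1) (by omega)
    constructor
    · rintro ⟨c, hc⟩
      have hov : ∃ c, (o c).val = k := ⟨c, congrArg Fin.val hc⟩
      rcases hstepk with ⟨-, -, h1⟩ | ⟨-, hno, -⟩
      · rcases hstepk1 with ⟨-, -, h2⟩ | ⟨⟨c', hc'⟩, -, -⟩
        · exfalso; omega
        · exact ⟨c', Fin.ext hc'⟩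
      · exact absurd hov hno
    · rintro ⟨c, hc⟩
      have hun : ∃ c', (u c').val = k + 1 := ⟨c, congrArg Fin.val hc⟩
      rcases hstepk with ⟨⟨c', hc'⟩, -, -⟩ | ⟨-, -, h1⟩
      · exact ⟨c', Fin.ext hc'⟩
      · rcases hstepk1 with ⟨-, hnu, -⟩ | ⟨-, -, h2⟩
        · exact absurd hun hnu
        · exfalso; omega
  · -- alternating → equality
    intro halt
    have two_step : ∀ k, k + 2 ≤ 2 * n → wdAt n o u (k + 1 + 1) = wdAt n o u k := by
      intro k hk2
      have hiff := halt ⟨k, by omega⟩ ⟨k + 1, by omega⟩ rfl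
      have hiff' : (∃ c, (o c).val = k) ↔ (∃ c, (u c).val = k + 1) := by
        constructor
        · rintro ⟨c, hc⟩
          obtain ⟨c', hc'⟩ := hiff.1 ⟨c, Fin.ext hc⟩
          exact ⟨c', congrArg Fin.val hc'⟩
        · rintro ⟨c, hc⟩
          obtain ⟨c', hc'⟩ := hiff.2 ⟨c, Fin.ext hc⟩
          exact ⟨c', congrArg Fin.val hc'⟩
      have hstepk := wd_step (o := o) (u := u) hval (k := k) (by omega)
      have hstepk1 := wd_step (o := o) (u := u) hval (k := k + 1) (by omega)
      rcases hstepk with ⟨hov, -, h1⟩ | ⟨-, hno, h1⟩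
      · have hun := hiff'.1 hov
        rcases hstepk1 with ⟨-, hnu, -⟩ | ⟨-, -, h2⟩
        · exact absurd hun hnu
        · omega
      · have hnu1 : ¬ ∃ c, (u c).val = k + 1 := fun h => hno (hiff'.2 h)
        rcases hstepk1 with ⟨-, -, h2⟩ | ⟨hun, -, -⟩
        · omega
        · exact absurd hun hnu1
    have key : ∀ k, k ≤ 2 * n → wdAt n o u k = wdAt n o u 0 ∨ wdAt n o u k = wdAt n o u 1 := by
      intro k
      induction k using Nat.twoStepInduction with
      | zero => intro _; exact Or.inl rfl
      | one => intro _; exact Or.inr rfl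
      | more m ih _ =>
        intro hm
        have e : m + 2 = m + 1 + 1 := rfl
        rw [e, two_step m (by omega)]
        exact ih (by omega)
    have h01 : wdAt n o u 1 = wdAt n o u 0 + 1 ∨ wdAt n o u 0 = wdAt n o u 1 + 1 := by
      rcases wd_step (o := o) (u := u) hval (k := 0) (by omega) with ⟨-, -, h⟩ | ⟨-, -, h⟩
      · exact Or.inl h
      · exact Or.inr h
    have hminv := key amin.val (by omega)
    have hmaxv := key amax.val (by omega)
    rw [wdAt_eq] at hminv hmaxv
    omega
end

section
/- With the Gauss-sequence model of a knotoid diagram D with n crossings and base point a: for every crossing c, cut_{(−D)_{2n−a}}(c) = −cut_{D_a}(c), where cut denotes the cutting number (2·(label of over-passage) − (sum of labels of the two under-arcs)) computed with labels relative to the respective base point, and −D is the reversed diagram with positions p ↦ 2n−1−p. -/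
/-- The relative label of the gap between the head and the tail of the knotoid (the gap
sits between relative labels `jumpLabel` and `jumpLabel + 1`). -/
def jumpLabel (n : ℕ) (a : Fin (2 * n + 1)) : ℕ :=
  (4 * n - 1 - a.val) % (2 * n)

/-- The (1-indexed) label of the arc containing a point at relative position-label `ℓ`:
arcs are obtained by cutting at the base point, at the under-passages and at the
head/tail gap. -/
def arcLabel (n : ℕ) (u : Fin n → Fin (2 * n)) (a : Fin (2 * n + 1)) (ℓ : ℕ) : ℕ :=
  1 + (Finset.univ.filter fun c => relLabel n a (u c) < ℓ).card +
    (if jumpLabel n a < ℓ then 1 else 0)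

/-- The cutting number of crossing `c` at base point `a`, computed with arc labels:
`2·(label of the arc of the over-passage) − (sum of the labels of the two arcs meeting at
the under-passage)`, the two under-arcs having consecutive labels `β` and `β + 1`. -/
def cutArc (n : ℕ) (o u : Fin n → Fin (2 * n)) (a : Fin (2 * n + 1)) (c : Fin n) : ℤ :=
  2 * (arcLabel n u a (relLabel n a (o c)) : ℤ) -
    (arcLabel n u a (relLabel n a (u c)) : ℤ) -
    ((arcLabel n u a (relLabel n a (u c)) : ℤ) + 1)

lemma mod2n_eq (n x : ℕ) (h : x < 4 * n) :
    x % (2 * n) = if 2 * n ≤ x then x - 2 * n else x := by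
  split_ifs with hx
  · rw [Nat.mod_eq_sub_mod hx, Nat.mod_eq_of_lt (by omega)]
  · exact Nat.mod_eq_of_lt (by omega)

lemma relLabel_lt (n : ℕ) (hn : 0 < n) (a : Fin (2 * n + 1)) (p : Fin (2 * n)) :
    relLabel n a p < 2 * n := Nat.mod_lt _ (by omega)

lemma relLabel_inj (n : ℕ) (a : Fin (2 * n + 1)) {p q : Fin (2 * n)}
    (h : relLabel n a p = relLabel n a q) : p = q := by
  have hp := p.isLt; have hq := q.isLt; have ha := a.isLt
  unfold relLabel at h
  rw [mod2n_eq n _ (by omega), mod2n_eq n _ (by omega)] at h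
  apply Fin.ext
  split_ifs at h <;> omega

lemma rel_rev (n : ℕ) (a : Fin (2 * n + 1)) (p : Fin (2 * n)) :
    relLabel n (revBase n a) (revPos n p) = 2 * n - 1 - relLabel n a p := by
  have hp := p.isLt; have ha := a.isLt
  unfold relLabel revBase revPos
  simp only
  rw [mod2n_eq n _ (by omega), mod2n_eq n _ (by omega)]
  split_ifs <;> omega

lemma jump_rev_sum (n : ℕ) (hn : 0 < n) (a : Fin (2 * n + 1)) (ℓ : ℕ) (hℓ : ℓ < 2 * n) :
    (if jumpLabel n (revBase n a) < 2 * n - 1 - ℓ then 1 else 0) +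
      (if jumpLabel n a < ℓ then 1 else 0) =
    if a.val = 0 ∨ a.val = 2 * n then 0 else 1 := by
  have ha := a.isLt
  unfold jumpLabel revBase
  simp only
  rw [mod2n_eq n _ (by omega), mod2n_eq n _ (by omega)]
  split_ifs <;> omega

/-- The key computation in the proof of Lemma 4.1: the cutting number of every crossing
changes sign under orientation reversal, `cut_{(−D)_{2n−a}}(c) = −cut_{D_a}(c)`. -/
theorem cutArc_rev_eq_neg (n : ℕ) (o u : Fin n → Fin (2 * n))
    (hval : Function.Injective (Sum.elim o u : Fin n ⊕ Fin n → Fin (2 * n)))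
    (a : Fin (2 * n + 1)) (c : Fin n) :
    cutArc n (fun c' => revPos n (o c')) (fun c' => revPos n (u c')) (revBase n a) c =
      - cutArc n o u a c := by
  classical
  rcases Nat.eq_zero_or_pos n with hn | hn
  · subst hn; exact c.elim0
  have ha := a.isLt
  have hu : Function.Injective u := fun x y h => by
    have := hval (a₁ := Sum.inr x) (a₂ := Sum.inr y) (by simpa using h)
    simpa using this
  have hou : ∀ x y, u x ≠ o y := fun x y h => by
    have := hval (a₁ := Sum.inr x) (a₂ := Sum.inl y) (by simpa using h)
    simp at this
  -- trichotomy counting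
  have key : ∀ p : Fin (2 * n),
      (Finset.univ.filter fun c' => relLabel n a (u c') < relLabel n a p).card
      + ((Finset.univ.filter fun c' => u c' = p).card
      + (Finset.univ.filter fun c' => relLabel n a p < relLabel n a (u c')).card) = n := by
    intro p
    have e1 : (Finset.univ.filter fun c' => u c' = p)
        = (Finset.univ.filter fun c' => relLabel n a (u c') = relLabel n a p) := by
      apply Finset.filter_congr
      intro c' _
      constructor
      · rintro rfl; rfl
      · exact fun h => relLabel_inj n a h
    rw [e1]
    simp only [Finset.card_filter]
    rw [← Finset.sum_add_distrib, ← Finset.sum_add_distrib]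
    trans ∑ _c' : Fin n, 1
    · exact Finset.sum_congr rfl fun c' _ => by split_ifs <;> omega
    · simp
  have hEqO : (Finset.univ.filter fun c' => u c' = o c).card = 0 := by
    rw [Finset.card_eq_zero, Finset.filter_eq_empty_iff]
    exact fun _ _ => hou _ _
  have hEqU : (Finset.univ.filter fun c' => u c' = u c).card = 1 := by
    have : (Finset.univ.filter fun c' => u c' = u c) = {c} := by
      ext c'
      simp [hu.eq_iff]
    rw [this, Finset.card_singleton]
  have erev : ∀ p : Fin (2 * n),
      (Finset.univ.filter fun c' =>
          2 * n - 1 - relLabel n a (u c') < 2 * n - 1 - relLabel n a p)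
      = (Finset.univ.filter fun c' => relLabel n a p < relLabel n a (u c')) := by
    intro p
    apply Finset.filter_congr
    intro c' _
    have h1 := relLabel_lt n hn a (u c')
    have h2 := relLabel_lt n hn a p
    constructor <;> omega
  simp only [cutArc, arcLabel, rel_rev]
  rw [erev (o c), erev (u c)]
  have hjA := jump_rev_sum n hn a (relLabel n a (o c)) (relLabel_lt n hn a (o c))
  have hjB := jump_rev_sum n hn a (relLabel n a (u c)) (relLabel_lt n hn a (u c))
  have h1 := key (o c)
  have h2 := key (u c)
  rw [hEqO] at h1
  rw [hEqU] at h2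
  set J : ℕ := if a.val = 0 ∨ a.val = 2 * n then 0 else 1
  set jA' : ℕ := if jumpLabel n (revBase n a) < 2 * n - 1 - relLabel n a (o c) then 1 else 0
  set jB' : ℕ := if jumpLabel n (revBase n a) < 2 * n - 1 - relLabel n a (u c) then 1 else 0
  set jA : ℕ := if jumpLabel n a < relLabel n a (o c) then 1 else 0
  set jB : ℕ := if jumpLabel n a < relLabel n a (u c) then 1 else 0
  set cGtA := (Finset.univ.filter fun c' => relLabel n a (o c) < relLabel n a (u c')).card
  set cGtB := (Finset.univ.filter fun c' => relLabel n a (u c) < relLabel n a (u c')).card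
  set cLtA := (Finset.univ.filter fun c' => relLabel n a (u c') < relLabel n a (o c)).card
  set cLtB := (Finset.univ.filter fun c' => relLabel n a (u c') < relLabel n a (u c)).card
  push_cast
  omega
end
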